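/- If ‖K‖ < 1 (operator norm with respect to Euclidean norms), then the map T(x) = S_λ(x + Kᵀ(y - Kx)) satisfies F_λ(T(x)) ≤ F_λ(x) for all x ∈ ℝ^p, where F_λ(x) = ‖Kx - y‖² + 2λ‖x‖₁; i.e., the iterative soft-thresholding step does not increase the functional. -/
import Mathlib

open Finset Filter

/-- scalar soft-thresholding -/
noncomputable def softS (lam u : ℝ) : ℝ := Real.sign u * max (|u| - lam) 0

/-- componentwise soft-thresholding on ℝ^p -/
noncomputable def softV {p : ℕ} (lam : ℝ) (u : Fin p → ℝ) : Fin p → ℝ :=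
  fun i => softS lam (u i)

/-- Euclidean norm on ℝ^n -/
noncomputable def norm2 {n : ℕ} (v : Fin n → ℝ) : ℝ := Real.sqrt (∑ i, (v i) ^ 2)

/-- ℓ¹ norm on ℝ^n -/
noncomputable def normOne {n : ℕ} (v : Fin n → ℝ) : ℝ := ∑ i, |v i|

/-- the ℓ¹-penalized least-squares functional -/
noncomputable def Fl {m p : ℕ} (K : Matrix (Fin m) (Fin p) ℝ) (y : Fin m → ℝ)
    (lam : ℝ) (x : Fin p → ℝ) : ℝ :=
  (norm2 (K.mulVec x - y)) ^ 2 + 2 * lam * normOne x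

/-- sum of squares -/
noncomputable def qsum {n : ℕ} (v : Fin n → ℝ) : ℝ := ∑ i, (v i) ^ 2

lemma norm2_sq {n : ℕ} (v : Fin n → ℝ) : norm2 v ^ 2 = qsum v :=
  Real.sq_sqrt (Finset.sum_nonneg fun i _ => sq_nonneg _)

lemma norm2_nonneg' {n : ℕ} (v : Fin n → ℝ) : 0 ≤ norm2 v := Real.sqrt_nonneg _

lemma qsum_sub {n : ℕ} (a b : Fin n → ℝ) :
    qsum (a - b) = qsum a - 2 * (∑ i, a i * b i) + qsum b := by
  simp only [qsum, Pi.sub_apply]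
  rw [Finset.mul_sum, ← Finset.sum_sub_distrib, ← Finset.sum_add_distrib]
  exact Finset.sum_congr rfl fun i _ => by ring

lemma adj {m p : ℕ} (K : Matrix (Fin m) (Fin p) ℝ) (u : Fin p → ℝ) (r : Fin m → ℝ) :
    ∑ i, (K.mulVec u) i * r i = ∑ j, u j * (K.transpose.mulVec r) j := by
  simp only [Matrix.mulVec, dotProduct, Matrix.transpose_apply,
    Finset.sum_mul, Finset.mul_sum]
  rw [Finset.sum_comm]
  exact Finset.sum_congr rfl fun i _ => Finset.sum_congr rfl fun j _ => by ring

lemma softS_min (lam : ℝ) (hlam : 0 ≤ lam) (b t : ℝ) :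
    (softS lam b - b) ^ 2 + 2 * lam * |softS lam b| ≤ (t - b) ^ 2 + 2 * lam * |t| := by
  unfold softS
  rcases le_or_gt |b| lam with h | h
  · rw [max_eq_right (by linarith), mul_zero]
    simp only [zero_sub, abs_zero, mul_zero, add_zero, neg_sq]
    have h1 : t * b ≤ |t| * |b| := by rw [← abs_mul]; exact le_abs_self _
    have h2 : |t| * |b| ≤ |t| * lam := mul_le_mul_of_nonneg_left h (abs_nonneg t)
    nlinarith [sq_nonneg t]
  · rw [max_eq_left (by linarith)]
    rcases lt_trichotomy b 0 with hb | hb | hb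
    · rw [Real.sign_of_neg hb, abs_of_neg hb,
        show (-1 : ℝ) * (-b - lam) = b + lam by ring]
      have hn : b + lam < 0 := by
        have : lam < -b := by rw [abs_of_neg hb] at h; exact h
        linarith
      rw [abs_of_neg hn]
      nlinarith [neg_le_abs t, sq_nonneg (t - b - lam)]
    · exfalso; rw [hb, abs_zero] at h; linarith
    · rw [Real.sign_of_pos hb, abs_of_pos hb, one_mul]
      have hn : 0 < b - lam := by
        have : lam < b := by rw [abs_of_pos hb] at h; exact h
        linarith
      rw [abs_of_pos hn]
      nlinarith [le_abs_self t, sq_nonneg (t - b + lam)]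

theorem ist_step_decreases {m p : ℕ} (K : Matrix (Fin m) (Fin p) ℝ)
    (y : Fin m → ℝ) (lam : ℝ) (hlam : 0 ≤ lam)
    (hK : ∃ c : ℝ, 0 ≤ c ∧ c < 1 ∧ ∀ x : Fin p → ℝ, norm2 (K.mulVec x) ≤ c * norm2 x) :
    ∀ x : Fin p → ℝ,
      Fl K y lam (softV lam (x + K.transpose.mulVec (y - K.mulVec x))) ≤ Fl K y lam x := by
  obtain ⟨c, hc0, hc1, hcK⟩ := hK
  -- contraction on sums of squares
  have hq : ∀ v : Fin p → ℝ, qsum (K.mulVec v) ≤ qsum v := by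
    intro v
    have h1 : norm2 (K.mulVec v) ≤ norm2 v :=
      le_trans (hcK v) (by nlinarith [norm2_nonneg' v])
    nlinarith [norm2_nonneg' (K.mulVec v), norm2_nonneg' v,
      norm2_sq (K.mulVec v), norm2_sq v]
  intro x
  set r : Fin m → ℝ := y - K.mulVec x with hr
  set b : Fin p → ℝ := x + K.transpose.mulVec r with hb
  set w : Fin p → ℝ := softV lam b with hw
  -- key algebraic identity
  have key : ∀ z : Fin p → ℝ,
      qsum (K.mulVec z - y) + (qsum (z - x) - qsum (K.mulVec (z - x)))
        = qsum (z - b) + (qsum r - qsum (K.transpose.mulVec r)) := by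
    intro z
    have h1 : K.mulVec z - y = K.mulVec (z - x) - r := by
      rw [Matrix.mulVec_sub]; funext i
      simp only [hr, Pi.sub_apply]; ring
    have h2 : z - b = (z - x) - K.transpose.mulVec r := by
      funext i; simp only [hb, Pi.sub_apply, Pi.add_apply]; ring
    rw [h1, h2, qsum_sub (K.mulVec (z - x)) r, qsum_sub (z - x) (K.transpose.mulVec r)]
    have := adj K (z - x) r
    linarith
  -- componentwise minimization
  have hsum : qsum (w - b) + 2 * lam * normOne w ≤ qsum (x - b) + 2 * lam * normOne x := by
    have e1 : ∀ z : Fin p → ℝ, qsum (z - b) + 2 * lam * normOne z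
        = ∑ i, ((z i - b i) ^ 2 + 2 * lam * |z i|) := by
      intro z
      rw [Finset.sum_add_distrib]
      simp only [qsum, normOne, Pi.sub_apply, Finset.mul_sum]
    rw [e1, e1]
    refine Finset.sum_le_sum fun i _ => ?_
    exact softS_min lam hlam (b i) (x i)
  have kw := key w
  have kx := key x
  have hq0p : qsum (0 : Fin p → ℝ) = 0 := by simp [qsum]
  have hq0m : qsum (0 : Fin m → ℝ) = 0 := by simp [qsum]
  rw [sub_self, Matrix.mulVec_zero, hq0p, hq0m] at kx
  have hqw := hq (w - x)
  have eFl : ∀ z : Fin p → ℝ, Fl K y lam z = qsum (K.mulVec z - y) + 2 * lam * normOne z := by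
    intro z; rw [Fl, norm2_sq]
  rw [eFl, eFl]
  linarith
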